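/- An even integer N has a potentially connected graphical partition with exactly n parts if and only if N has a forcibly connected graphical partition with exactly n parts. -/

import Mathlib

open SimpleGraph Multiset Finset

/-- The multiset of vertex degrees of a simple graph on a finite vertex type. -/
noncomputable def degreeMultiset {V : Type*} [Fintype V] (G : SimpleGraph V) : Multiset ℕ :=
  Finset.univ.val.map fun v => (G.neighborSet v).ncard

/-- A multiset of naturals is graphical if it is the degree multiset of some simple graph. -/
def IsGraphicalM (m : Multiset ℕ) : Prop :=
  ∃ G : SimpleGraph (Fin (Multiset.card m)), degreeMultiset G = m

/-- A multiset is potentially connected if some realization is connected. -/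
def PotentiallyConnectedM (m : Multiset ℕ) : Prop :=
  ∃ G : SimpleGraph (Fin (Multiset.card m)), degreeMultiset G = m ∧ G.Connected

/-- A multiset is forcibly connected if every realization is connected. -/
def ForciblyConnectedM (m : Multiset ℕ) : Prop :=
  ∀ G : SimpleGraph (Fin (Multiset.card m)), degreeMultiset G = m → G.Connected

/-- The multiset of terms of a finite sequence. -/
def seqM {n : ℕ} (d : Fin n → ℕ) : Multiset ℕ :=
  Finset.univ.val.map d

/-- A sequence is graphical if some simple graph on `Fin n` realizes it. -/
def IsGraphicalSeq {n : ℕ} (d : Fin n → ℕ) : Prop :=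
  ∃ G : SimpleGraph (Fin n), degreeMultiset G = seqM d

/-- A sequence is potentially connected if some realization is connected. -/
def PotentiallyConnectedSeq {n : ℕ} (d : Fin n → ℕ) : Prop :=
  ∃ G : SimpleGraph (Fin n), degreeMultiset G = seqM d ∧ G.Connected

/-- A sequence is forcibly connected if every realization is connected. -/
def ForciblyConnectedSeq {n : ℕ} (d : Fin n → ℕ) : Prop :=
  ∀ G : SimpleGraph (Fin n), degreeMultiset G = seqM d → G.Connected

/-!
A connected realization of `m` on `n` vertices has `e = N / 2` edges, where `n - 1 ≤ e` (it
contains a spanning tree) and `e ≤ n.choose 2`. Hence the star at one vertex together with any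
`e - (n - 1)` further edges is a graph on `n` vertices with `e` edges and no isolated vertex, whose
degree multiset contains `n - 1`. A degree multiset containing `n - 1` is forcibly connected: in any
realization, the vertex of that degree is adjacent to all others.
-/

namespace SimpleGraph

variable {V : Type*} [Fintype V]

lemma ncard_neighborSet_eq_degree (G : SimpleGraph V) [DecidableRel G.Adj] (v : V) :
    (G.neighborSet v).ncard = G.degree v := by
  rw [← Nat.card_coe_set_eq, Nat.card_eq_fintype_card, card_neighborSet_eq_degree]

lemma card_edgeSet_le_choose_two (G : SimpleGraph V) :
    Nat.card G.edgeSet ≤ (Fintype.card V).choose 2 := by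
  classical
  rw [Nat.card_eq_fintype_card, ← edgeFinset_card]
  exact G.card_edgeFinset_le_card_choose_two

lemma exists_isUniversal_card_edgeSet [DecidableEq V] (v : V) {e : ℕ}
    (h₁ : Fintype.card V ≤ e + 1) (h₂ : e ≤ (Fintype.card V).choose 2) :
    ∃ H : SimpleGraph V, H.IsUniversal v ∧ Nat.card H.edgeSet = e := by
  have hstar : #((⊤ : SimpleGraph V).incidenceFinset v) ≤ e := by
    rw [card_incidenceFinset_eq_degree, (degree_eq_card_sub_one _ _).2 IsUniversal.top]
    omega
  obtain ⟨T, hstarT, hT, hTe⟩ := Finset.exists_subsuperset_card_eq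
    (incidenceFinset_subset (⊤ : SimpleGraph V) v) hstar
    (by rwa [card_edgeFinset_top_eq_card_choose_two])
  have hTdiag : (T : Set (Sym2 V)) ⊆ Sym2.diagSetᶜ := by
    simpa [← edgeSet_top] using Finset.coe_subset.2 hT
  have hedges : (fromEdgeSet (T : Set (Sym2 V))).edgeSet = T := by
    rw [edgeSet_fromEdgeSet, sdiff_eq_left]
    exact Set.subset_compl_iff_disjoint_right.1 hTdiag
  refine ⟨fromEdgeSet T, fun w hvw => (fromEdgeSet_adj _).2 ⟨hstarT ?_, hvw⟩, ?_⟩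
  · simpa [mk'_mem_incidenceSet_left_iff] using hvw
  · rw [hedges, Nat.card_coe_set_eq, Set.ncard_coe_finset, hTe]

end SimpleGraph

section DegreeMultiset

variable {V : Type*} [Fintype V] (G : SimpleGraph V)

lemma degreeMultiset_eq_map_degree [DecidableRel G.Adj] :
    degreeMultiset G = univ.val.map fun v => G.degree v := by
  simp only [degreeMultiset, ncard_neighborSet_eq_degree]

lemma card_degreeMultiset : Multiset.card (degreeMultiset G) = Fintype.card V := by
  simp [degreeMultiset, Finset.card_univ]

lemma mem_degreeMultiset [DecidableRel G.Adj] {d : ℕ} :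
    d ∈ degreeMultiset G ↔ ∃ v, G.degree v = d := by
  simp [degreeMultiset_eq_map_degree]

lemma sum_degreeMultiset : (degreeMultiset G).sum = 2 * Nat.card G.edgeSet := by
  classical
  rw [degreeMultiset_eq_map_degree, ← Finset.sum_eq_multiset_sum, sum_degrees_eq_twice_card_edges,
    edgeFinset_card, Nat.card_eq_fintype_card]

lemma zero_notMem_degreeMultiset_iff : 0 ∉ degreeMultiset G ↔ ∀ v, ¬ G.IsIsolated v := by
  classical
  simp [mem_degreeMultiset, degree_eq_zero]

lemma SimpleGraph.Iso.degreeMultiset_eq {W : Type*} [Fintype W] {G' : SimpleGraph W}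
    (f : G ≃g G') : degreeMultiset G = degreeMultiset G' := by
  classical
  rw [degreeMultiset_eq_map_degree, degreeMultiset_eq_map_degree, ← map_univ_val_equiv f.toEquiv,
    Multiset.map_map]
  exact Multiset.map_congr rfl fun v _ => (f.degree_eq v).symm

lemma isGraphicalM_degreeMultiset : IsGraphicalM (degreeMultiset G) :=
  let e := Fintype.equivFinOfCardEq (card_degreeMultiset G).symm
  ⟨G.map e.toEmbedding, (SimpleGraph.Iso.map e G).degreeMultiset_eq.symm⟩

end DegreeMultiset

lemma forciblyConnectedM_of_card_sub_one_mem {m : Multiset ℕ} (h : Multiset.card m - 1 ∈ m) :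
    ForciblyConnectedM m := by
  classical
  intro G hG
  obtain ⟨v, hv⟩ := (mem_degreeMultiset G).1 (hG ▸ h)
  exact .of_isUniversal ((degree_eq_card_sub_one G v).1 (by simpa [card_degreeMultiset] using hv))

theorem stmt10_general (N n : ℕ) :
    (∃ m : Multiset ℕ, Multiset.card m = n ∧ 0 ∉ m ∧ m.sum = N ∧
      IsGraphicalM m ∧ PotentiallyConnectedM m) ↔
    (∃ m : Multiset ℕ, Multiset.card m = n ∧ 0 ∉ m ∧ m.sum = N ∧
      IsGraphicalM m ∧ ForciblyConnectedM m) := by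
  refine ⟨fun ⟨m, hcard, h0, hsum, _, G, hG, hconn⟩ => ?_,
    fun ⟨m, hcard, h0, hsum, hgr, hforc⟩ => ⟨m, hcard, h0, hsum, hgr,
      hgr.imp fun G hG => ⟨hG, hforc G hG⟩⟩⟩
  obtain ⟨v⟩ := hconn.nonempty
  obtain ⟨H, hHv, hHe⟩ := exists_isUniversal_card_edgeSet v
    (by simpa using hconn.card_vert_le_card_edgeSet_add_one) G.card_edgeSet_le_choose_two
  have : Nontrivial (Fin (Multiset.card m)) := by
    obtain ⟨w, hvw⟩ := not_forall_not.1 (((zero_notMem_degreeMultiset_iff G).1 (by rwa [hG])) v)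
    exact ⟨v, w, hvw.ne⟩
  refine ⟨degreeMultiset H, ?_, ?_, ?_, isGraphicalM_degreeMultiset H,
    forciblyConnectedM_of_card_sub_one_mem ?_⟩
  · simp [card_degreeMultiset, hcard]
  · exact (zero_notMem_degreeMultiset_iff H).2 hHv.not_isIsolated
  · rw [sum_degreeMultiset, hHe, ← sum_degreeMultiset, hG, hsum]
  · classical
    refine (mem_degreeMultiset H).2 ⟨v, ?_⟩
    simpa [card_degreeMultiset] using (degree_eq_card_sub_one H v).2 hHv

theorem stmt10 (N n : ℕ) (hN : Even N) :
    (∃ m : Multiset ℕ, Multiset.card m = n ∧ 0 ∉ m ∧ m.sum = N ∧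
      IsGraphicalM m ∧ PotentiallyConnectedM m) ↔
    (∃ m : Multiset ℕ, Multiset.card m = n ∧ 0 ∉ m ∧ m.sum = N ∧
      IsGraphicalM m ∧ ForciblyConnectedM m) :=
  stmt10_general N n
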